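/- arXiv:1605.03127 — 3 statements merged into one kernel-verified Lean document; each statement's English description precedes it below -/
import Mathlib

section
/- Let X be a paracompact Hausdorff topological space and Y be a Hausdorff topological vector space. Let T : X → 2^Y be a correspondence with nonempty convex values such that for each y ∈ Y the lower section T⁻¹(y) = {x ∈ X : y ∈ T(x)} is open in X. Then T has a continuous selection, i.e., there exists a continuous function f : X → Y such that f(x) ∈ T(x) for each x ∈ X. -/
theorem yannelis_prabhakar_continuous_selection_general
    {X Y : Type*} [TopologicalSpace X] [ParacompactSpace X] [T2Space X]
    [AddCommGroup Y] [Module ℝ Y] [TopologicalSpace Y]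
    [IsTopologicalAddGroup Y] [ContinuousSMul ℝ Y]
    (T : X → Set Y)
    (hTne : ∀ x, (T x).Nonempty)
    (hTconv : ∀ x, Convex ℝ (T x))
    (hTopen : ∀ y : Y, IsOpen {x : X | y ∈ T x}) :
    ∃ f : X → Y, Continuous f ∧ ∀ x, f x ∈ T x := by
  -- Open lower sections make every point of `T x` a constant selection near `x`;
  -- a partition of unity glues these, and convexity keeps the glued value in `T`.
  have hlocal : ∀ x, ∃ y : Y, ∀ᶠ x' in nhds x, y ∈ T x' := fun x =>
    (hTne x).imp fun y hy => (hTopen y).mem_nhds hy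
  obtain ⟨f, hf⟩ := exists_continuous_forall_mem_convex_of_local_const hTconv hlocal
  exact ⟨f, f.continuous, hf⟩

/-- **Yannelis–Prabhakar continuous selection lemma.**
Let `X` be a paracompact Hausdorff topological space and `Y` a Hausdorff topological
vector space. If `T : X → 2^Y` has nonempty convex values and open lower sections
`T⁻¹(y) = {x : y ∈ T x}`, then `T` admits a continuous selection. -/
theorem yannelis_prabhakar_continuous_selection
    {X Y : Type*} [TopologicalSpace X] [ParacompactSpace X] [T2Space X]
    [AddCommGroup Y] [Module ℝ Y] [TopologicalSpace Y]
    [IsTopologicalAddGroup Y] [ContinuousSMul ℝ Y] [T2Space Y]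
    (T : X → Set Y)
    (hTne : ∀ x, (T x).Nonempty)
    (hTconv : ∀ x, Convex ℝ (T x))
    (hTopen : ∀ y : Y, IsOpen {x : X | y ∈ T x}) :
    ∃ f : X → Y, Continuous f ∧ ∀ x, f x ∈ T x :=
  yannelis_prabhakar_continuous_selection_general T hTne hTconv hTopen
end

section
/- Let X be a nonempty, convex and compact set in a Hausdorff locally convex topological vector space E, let C ⊆ E be a nonempty closed convex cone, let A : X → 2^X be a correspondence, and let F : X × X × X → 2^E be a correspondence with nonempty values such that for each y ∈ X the correspondence (u,z) ↦ F(u,y,z) is lower (−C)-semicontinuous. Then for each fixed y ∈ X, the set { x ∈ X : there exist u, z ∈ Ā(x) such that F(u,y,z) ⊆ C } is closed in X; equivalently, the set { x ∈ X : Ā(x) ∩ { u ∈ X : ∃ z ∈ Ā(x), F(u,y,z) ⊆ C } = ∅ } is open in X. -/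
open Pointwise in
/-- A correspondence `T : K → 2^Y` is lower `(−C)`-semicontinuous if at every `x₀ ∈ K`,
for any neighborhood `U` of the origin in `Y` there is a neighborhood `V` of `x₀` in `K`
such that for all `x ∈ V`, `T(x₀) ⊆ T(x) + U + C`. -/
def LowerNegCSemicontinuousOn {α Y : Type*} [TopologicalSpace α] [AddCommGroup Y]
    [TopologicalSpace Y] (K : Set α) (C : Set Y) (T : α → Set Y) : Prop :=
  ∀ x₀ ∈ K, ∀ U ∈ nhds (0 : Y), ∃ V ∈ nhdsWithin x₀ K, ∀ x ∈ V, T x₀ ⊆ T x + U + C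

/-- The graph of the correspondence `A : X → 2^X`, i.e. `Gr A = {(x,y) ∈ X × X : y ∈ A(x)}`. -/
def corrGraph {E : Type*} (X : Set E) (A : E → Set E) : Set (E × E) :=
  (X ×ˢ X) ∩ {p : E × E | p.2 ∈ A p.1}

/-- The correspondence `Ā`, defined by `Ā(x) = {y ∈ X : (x,y) ∈ cl_{X×X} Gr A}`. -/
def corrBar {E : Type*} [TopologicalSpace E] (X : Set E) (A : E → Set E) (x : E) : Set E :=
  {y ∈ X | (x, y) ∈ closure (corrGraph X A) ∩ X ×ˢ X}

/-!
Lower `(−C)`-semicontinuity, with `C` closed and `C + C ⊆ C`, makes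
`P = {(u, z) ∈ X × X : F(u, y, z) ⊆ C}` closed in the compact set `X × X`, hence compact. The set
of the theorem is then the trace on `X` of the projection of the closed set
`{(x, u, z) : (x, u), (x, z) ∈ cl Gr A}` over `x ∈ E` along the compact factor `P`, and such
projections are closed. The second set is the complement of the first.
-/

open Pointwise Topology Set

theorem Convex.add_subset_of_smul_mem {𝕜 M : Type*} [Field 𝕜] [LinearOrder 𝕜]
    [IsStrictOrderedRing 𝕜] [AddCommGroup M] [Module 𝕜 M] {C : Set M} (hC : Convex 𝕜 C)
    (hcone : ∀ r : 𝕜, 0 < r → ∀ c ∈ C, r • c ∈ C) : C + C ⊆ C := by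
  rintro _ ⟨a, ha, b, hb, rfl⟩
  have hmid : (2⁻¹ : 𝕜) • a + (2⁻¹ : 𝕜) • b ∈ C :=
    hC ha hb (by positivity) (by positivity) (by norm_num)
  convert hcone 2 two_pos _ hmid using 1
  simp only [smul_add, smul_smul, mul_inv_cancel₀ (two_ne_zero' 𝕜), one_smul]

section LowerNegCSemicontinuousOn

variable {α Y : Type*} [TopologicalSpace α] [AddCommGroup Y] [TopologicalSpace Y]
  [ContinuousSub Y] {K : Set α} {C : Set Y} {T : α → Set Y}

/-- Near a limit point `x` of `{T ⊆ C}`, every `v ∈ T x` lies in `T x' + U + C ⊆ C + U + C`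
for some `x'` with `T x' ⊆ C`; as `C + C ⊆ C`, this puts `C` in every neighbourhood of `v`. -/
theorem LowerNegCSemicontinuousOn.subset_of_mem_closure (hT : LowerNegCSemicontinuousOn K C T)
    (hC : IsClosed C) (hCadd : C + C ⊆ C) {x : α} (hxK : x ∈ K)
    (hx : x ∈ closure {x' ∈ K | T x' ⊆ C}) : T x ⊆ C := by
  intro v hv
  rw [← hC.closure_eq, mem_closure_iff_nhds]
  intro N hN
  have hU : {w : Y | v - w ∈ N} ∈ 𝓝 (0 : Y) :=
    (continuous_const.sub continuous_id).continuousAt.preimage_mem_nhds (by simpa using hN)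
  obtain ⟨V, hV, hTV⟩ := hT x hxK _ hU
  obtain ⟨x', ⟨hx'K, hx'C⟩, hx'V⟩ :=
    ((mem_closure_iff_frequently.mp hx).and_eventually (mem_nhdsWithin_iff_eventually.mp hV)).exists
  obtain ⟨_, ⟨f, hf, w, hw, rfl⟩, c, hc, hvfwc⟩ := hTV x' (hx'V hx'K) hv
  have hvw : v - w = f + c := by
    rw [← hvfwc]
    simp only
    abel
  exact ⟨f + c, hvw ▸ (hw : v - w ∈ N), hCadd ⟨f, hx'C hf, c, hc, rfl⟩⟩

theorem LowerNegCSemicontinuousOn.isCompact_setOf_subset (hT : LowerNegCSemicontinuousOn K C T)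
    (hK : IsCompact K) (hC : IsClosed C) (hCadd : C + C ⊆ C) :
    IsCompact {x ∈ K | T x ⊆ C} := by
  convert hK.inter_right (isClosed_closure (s := {x ∈ K | T x ⊆ C})) using 1
  refine Subset.antisymm (fun x hx => ⟨hx.1, subset_closure hx⟩) fun x ⟨hxK, hx⟩ => ?_
  exact ⟨hxK, hT.subset_of_mem_closure hC hCadd hxK hx⟩

end LowerNegCSemicontinuousOn

theorem IsCompact.isClosed_setOf_exists_mem_prod {α β : Type*} [TopologicalSpace α]
    [TopologicalSpace β] {K : Set β} (hK : IsCompact K) {R : Set (α × β)} (hR : IsClosed R) :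
    IsClosed {a | ∃ b ∈ K, (a, b) ∈ R} := by
  have : CompactSpace K := isCompact_iff_compactSpace.mp hK
  have hproj : IsClosed (Prod.fst '' {q : α × K | (q.1, (q.2 : β)) ∈ R}) :=
    isClosedMap_fst_of_compactSpace _ (hR.preimage (by fun_prop))
  convert hproj using 1
  ext a
  simp

theorem mem_corrBar_iff {E : Type*} [TopologicalSpace E] {X : Set E} {A : E → Set E} {x u : E}
    (hx : x ∈ X) : u ∈ corrBar X A x ↔ u ∈ X ∧ (x, u) ∈ closure (corrGraph X A) := by
  simp [corrBar, hx, and_comm]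

theorem isClosed_exists_subset_cone_section_general
    {E : Type*} [AddCommGroup E] [Module ℝ E] [TopologicalSpace E]
    [IsTopologicalAddGroup E]
    {X : Set E} (hXcomp : IsCompact X)
    {C : Set E} (hCclosed : IsClosed C) (hCconv : Convex ℝ C)
    (hCcone : ∀ r : ℝ, 0 < r → ∀ c ∈ C, r • c ∈ C)
    (A : E → Set E)
    (F : E → E → E → Set E)
    (hFlsc : ∀ y ∈ X, LowerNegCSemicontinuousOn (X ×ˢ X) C (fun p : E × E => F p.1 y p.2))
    (y : E) (hy : y ∈ X) :
    IsClosed {x : X | ∃ u ∈ corrBar X A (x : E), ∃ z ∈ corrBar X A (x : E), F u y z ⊆ C} ∧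
    IsOpen {x : X |
      corrBar X A (x : E) ∩ {u : E | ∃ z ∈ corrBar X A (x : E), F u y z ⊆ C} = ∅} := by
  have hP : IsCompact {p ∈ X ×ˢ X | F p.1 y p.2 ⊆ C} :=
    (hFlsc y hy).isCompact_setOf_subset (hXcomp.prod hXcomp) hCclosed
      (hCconv.add_subset_of_smul_mem hCcone)
  have hR : IsClosed {q : E × (E × E) | (q.1, q.2.1) ∈ closure (corrGraph X A) ∧
      (q.1, q.2.2) ∈ closure (corrGraph X A)} :=
    (isClosed_closure.preimage (by fun_prop)).inter (isClosed_closure.preimage (by fun_prop))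
  have hclosed :
      IsClosed {x : X | ∃ u ∈ corrBar X A (x : E), ∃ z ∈ corrBar X A (x : E), F u y z ⊆ C} := by
    convert (hP.isClosed_setOf_exists_mem_prod hR).preimage continuous_subtype_val using 1
    ext x
    simp only [mem_corrBar_iff x.2, mem_ofPred_eq, mem_preimage, Prod.exists, mem_prod]
    constructor
    · rintro ⟨u, ⟨huX, hu⟩, z, ⟨hzX, hz⟩, hF⟩
      exact ⟨u, z, ⟨⟨huX, hzX⟩, hF⟩, hu, hz⟩
    · rintro ⟨u, z, ⟨⟨huX, hzX⟩, hF⟩, hu, hz⟩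
      exact ⟨u, ⟨huX, hu⟩, z, ⟨hzX, hz⟩, hF⟩
  refine ⟨hclosed, ?_⟩
  convert hclosed.isOpen_compl using 1
  ext x
  simp [eq_empty_iff_forall_notMem]

/-- Let `X` be a nonempty convex compact set in a Hausdorff locally convex space `E`,
`C ⊆ E` a nonempty closed convex cone, `A : X → 2^X` a correspondence, and
`F : X × X × X → 2^E` a correspondence with nonempty values such that for each `y ∈ X`,
`(u,z) ↦ F(u,y,z)` is lower `(−C)`-semicontinuous.  Then for each fixed `y ∈ X` the set
`{x ∈ X : ∃ u, z ∈ Ā(x), F(u,y,z) ⊆ C}` is closed in `X`; equivalently, the set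
`{x ∈ X : Ā(x) ∩ {u : ∃ z ∈ Ā(x), F(u,y,z) ⊆ C} = ∅}` is open in `X`. -/
theorem isClosed_exists_subset_cone_section
    {E : Type*} [AddCommGroup E] [Module ℝ E] [TopologicalSpace E]
    [IsTopologicalAddGroup E] [ContinuousSMul ℝ E] [T2Space E] [LocallyConvexSpace ℝ E]
    {X : Set E} (hXne : X.Nonempty) (hXconv : Convex ℝ X) (hXcomp : IsCompact X)
    {C : Set E} (hCne : C.Nonempty) (hCclosed : IsClosed C) (hCconv : Convex ℝ C)
    (hCcone : ∀ r : ℝ, 0 < r → ∀ c ∈ C, r • c ∈ C)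
    (A : E → Set E) (hAsub : ∀ x ∈ X, A x ⊆ X)
    (F : E → E → E → Set E)
    (hFne : ∀ u ∈ X, ∀ y ∈ X, ∀ z ∈ X, (F u y z).Nonempty)
    (hFlsc : ∀ y ∈ X, LowerNegCSemicontinuousOn (X ×ˢ X) C (fun p : E × E => F p.1 y p.2))
    (y : E) (hy : y ∈ X) :
    IsClosed {x : X | ∃ u ∈ corrBar X A (x : E), ∃ z ∈ corrBar X A (x : E), F u y z ⊆ C} ∧
    IsOpen {x : X |
      corrBar X A (x : E) ∩ {u : E | ∃ z ∈ corrBar X A (x : E), F u y z ⊆ C} = ∅} :=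
  isClosed_exists_subset_cone_section_general hXcomp hCclosed hCconv hCcone A F hFlsc y hy
end

section
/- Let X be a nonempty, convex and compact set in a Hausdorff locally convex topological vector space E, let C ⊆ E be a nonempty closed convex cone with nonempty interior, let A : X → 2^X be a correspondence such that Ā is lower semicontinuous, and let F : X × X × X → 2^E be an upper semicontinuous correspondence with nonempty closed values. Then the set U = { (x,y) ∈ X × X : for every u ∈ Ā(x) and every z ∈ Ā(x), F(u,y,z) ⊄ int C } is closed in X × X. -/
/-- A correspondence `T : K → 2^Y` is upper semicontinuous if for each `x ∈ K` and each
open `V ⊆ Y` with `T(x) ⊆ V` there is a neighborhood `W` of `x` in `K` on which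
`T(y) ⊆ V`. -/
def UpperSemicontinuousCorrOn {α Y : Type*} [TopologicalSpace α] [TopologicalSpace Y]
    (K : Set α) (T : α → Set Y) : Prop :=
  ∀ x ∈ K, ∀ V : Set Y, IsOpen V → T x ⊆ V → ∃ W ∈ nhdsWithin x K, ∀ y ∈ W, T y ⊆ V

/-- A correspondence `T : K → 2^Y` is lower semicontinuous if for each `x ∈ K` and each
open `V ⊆ Y` with `T(x) ∩ V ≠ ∅` there is a neighborhood `W` of `x` in `K` on which
`T(y) ∩ V ≠ ∅`. -/
def LowerSemicontinuousCorrOn {α Y : Type*} [TopologicalSpace α] [TopologicalSpace Y]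
    (K : Set α) (T : α → Set Y) : Prop :=
  ∀ x ∈ K, ∀ V : Set Y, IsOpen V → (T x ∩ V).Nonempty →
    ∃ W ∈ nhdsWithin x K, ∀ y ∈ W, (T y ∩ V).Nonempty

/-!
The complement of `U` in `X × X` is relatively open. If `u, z ∈ Ā(x)` and `F(u,y,z) ⊆ int C`,
upper semicontinuity of `F` gives neighbourhoods `O₁ × O₂ × O₃` of `(u,y,z)` on which
`F ⊆ int C`, and lower semicontinuity of `Ā` gives, for `x'` near `x`, points `u' ∈ Ā(x') ∩ O₁`
and `z' ∈ Ā(x') ∩ O₃`; so `F(u',y',z') ⊆ int C` for all `(x',y')` near `(x,y)`.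
-/

section

open Filter Set Topology

variable {α β γ Y : Type*} [TopologicalSpace α] [TopologicalSpace β] [TopologicalSpace γ]
  [TopologicalSpace Y]

theorem IsClosed.sep_of_eventually_not {s : Set α} {P : α → Prop} (hs : IsClosed s)
    (h : ∀ x ∈ s, ¬ P x → ∀ᶠ y in 𝓝[s] x, ¬ P y) : IsClosed {x ∈ s | P x} := by
  refine isClosed_of_closure_subset fun x hx => ?_
  have hxs : x ∈ s := closure_minimal (sep_subset s P) hs hx
  refine ⟨hxs, by_contra fun hPx => ?_⟩
  have := mem_closure_iff_nhdsWithin_neBot.1 hx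
  obtain ⟨y, hPy, -, hy⟩ :=
    (((h x hxs hPx).filter_mono (nhdsWithin_mono x (sep_subset s P))).and
      self_mem_nhdsWithin).exists
  exact hPy hy

theorem LowerSemicontinuousCorrOn.eventually_inter_nonempty {K : Set α} {L : Set β}
    {T : α → Set β} (hT : LowerSemicontinuousCorrOn K T) (hTL : ∀ x ∈ K, T x ⊆ L)
    {x : α} (hx : x ∈ K) {u : β} (hu : u ∈ T x) {t : Set β} (ht : t ∈ 𝓝[L] u) :
    ∀ᶠ x' in 𝓝[K] x, (T x' ∩ t).Nonempty := by
  obtain ⟨O, hO, hOt⟩ := mem_nhdsWithin_iff_exists_mem_nhds_inter.1 ht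
  obtain ⟨W, hW, hmeets⟩ := hT x hx (interior O) isOpen_interior
    ⟨u, hu, mem_interior_iff_mem_nhds.2 hO⟩
  filter_upwards [hW, self_mem_nhdsWithin] with x' hx'W hx'K
  obtain ⟨u', hu'T, hu'O⟩ := hmeets x' hx'W
  exact ⟨u', hu'T, hOt ⟨interior_subset hu'O, hTL x' hx'K hu'T⟩⟩

theorem eventually_exists_subset_of_lowerSemicontinuousCorrOn {K : Set α} {L : Set β}
    {M : Set γ} {T : α → Set β} (hT : LowerSemicontinuousCorrOn K T)
    (hTL : ∀ x ∈ K, T x ⊆ L) {F : β × γ × β → Set Y}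
    (hF : UpperSemicontinuousCorrOn (L ×ˢ M ×ˢ L) F) {V : Set Y} (hV : IsOpen V)
    {x : α} (hx : x ∈ K) {y : γ} (hy : y ∈ M) {u z : β} (hu : u ∈ T x) (hz : z ∈ T x)
    (hFV : F (u, y, z) ⊆ V) :
    ∀ᶠ q in 𝓝[K ×ˢ M] (x, y), ∃ u' ∈ T q.1, ∃ z' ∈ T q.1, F (u', q.2, z') ⊆ V := by
  obtain ⟨W, hW, hWV⟩ := hF _ ⟨hTL x hx hu, hy, hTL x hx hz⟩ V hV hFV
  rw [nhdsWithin_prod_eq, nhdsWithin_prod_eq, mem_prod_iff] at hW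
  obtain ⟨t₁, ht₁, t₂₃, ht₂₃, ht₁₂₃⟩ := hW
  obtain ⟨t₂, ht₂, t₃, ht₃, ht₂₃W⟩ := mem_prod_iff.1 ht₂₃
  rw [nhdsWithin_prod_eq]
  filter_upwards [((hT.eventually_inter_nonempty hTL hx hu ht₁).and
    (hT.eventually_inter_nonempty hTL hx hz ht₃)).prod_mk ht₂]
  rintro ⟨x', y'⟩ ⟨⟨⟨u', hu'T, hu't⟩, ⟨z', hz'T, hz't⟩⟩, hy't⟩
  exact ⟨u', hu'T, z', hz'T, hWV _ (ht₁₂₃ ⟨hu't, ht₂₃W ⟨hy't, hz't⟩⟩)⟩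

theorem isClosed_sep_forall_not_subset {K : Set α} {L : Set β} {M : Set γ}
    (hK : IsClosed K) (hM : IsClosed M) {T : α → Set β} (hT : LowerSemicontinuousCorrOn K T)
    (hTL : ∀ x ∈ K, T x ⊆ L) {F : β × γ × β → Set Y}
    (hF : UpperSemicontinuousCorrOn (L ×ˢ M ×ˢ L) F) {V : Set Y} (hV : IsOpen V) :
    IsClosed {p ∈ K ×ˢ M | ∀ u ∈ T p.1, ∀ z ∈ T p.1, ¬ F (u, p.2, z) ⊆ V} := by
  refine (hK.prod hM).sep_of_eventually_not fun p hp hnot => ?_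
  push Not at hnot ⊢
  obtain ⟨u, hu, z, hz, hFV⟩ := hnot
  exact eventually_exists_subset_of_lowerSemicontinuousCorrOn hT hTL hF hV hp.1 hp.2 hu hz hFV

end

theorem isClosed_GSVQEP_set_general
    {E : Type*} [TopologicalSpace E] [T2Space E]
    {X : Set E} (hXcomp : IsCompact X)
    {C : Set E}
    (A : E → Set E)
    (hAbarLsc : LowerSemicontinuousCorrOn X (corrBar X A))
    (F : E → E → E → Set E)
    (hFusc : UpperSemicontinuousCorrOn (X ×ˢ (X ×ˢ X))
      (fun p : E × E × E => F p.1 p.2.1 p.2.2)) :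
    IsClosed {p ∈ X ×ˢ X |
      ∀ u ∈ corrBar X A p.1, ∀ z ∈ corrBar X A p.1, ¬ F u p.2 z ⊆ interior C} :=
  isClosed_sep_forall_not_subset hXcomp.isClosed hXcomp.isClosed hAbarLsc
    (fun _ _ _ hy => hy.1) hFusc isOpen_interior

/-- Let `X` be a nonempty convex compact set in a Hausdorff locally convex space `E`,
`C ⊆ E` a nonempty closed convex cone with nonempty interior, `A : X → 2^X` a
correspondence with `Ā` lower semicontinuous, and `F : X × X × X → 2^E` upper
semicontinuous with nonempty closed values.  Then the set
`U = {(x,y) ∈ X × X : ∀ u ∈ Ā(x), ∀ z ∈ Ā(x), F(u,y,z) ⊄ int C}` is closed in `X × X`. -/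
theorem isClosed_GSVQEP_set
    {E : Type*} [AddCommGroup E] [Module ℝ E] [TopologicalSpace E]
    [IsTopologicalAddGroup E] [ContinuousSMul ℝ E] [T2Space E] [LocallyConvexSpace ℝ E]
    {X : Set E} (hXne : X.Nonempty) (hXconv : Convex ℝ X) (hXcomp : IsCompact X)
    {C : Set E} (hCne : C.Nonempty) (hCclosed : IsClosed C) (hCconv : Convex ℝ C)
    (hCcone : ∀ r : ℝ, 0 < r → ∀ c ∈ C, r • c ∈ C) (hCint : (interior C).Nonempty)
    (A : E → Set E) (hAsub : ∀ x ∈ X, A x ⊆ X)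
    (hAbarLsc : LowerSemicontinuousCorrOn X (corrBar X A))
    (F : E → E → E → Set E)
    (hFusc : UpperSemicontinuousCorrOn (X ×ˢ (X ×ˢ X))
      (fun p : E × E × E => F p.1 p.2.1 p.2.2))
    (hFne : ∀ u ∈ X, ∀ y ∈ X, ∀ z ∈ X, (F u y z).Nonempty)
    (hFcl : ∀ u ∈ X, ∀ y ∈ X, ∀ z ∈ X, IsClosed (F u y z)) :
    IsClosed {p ∈ X ×ˢ X |
      ∀ u ∈ corrBar X A p.1, ∀ z ∈ corrBar X A p.1, ¬ F u p.2 z ⊆ interior C} :=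
  isClosed_GSVQEP_set_general hXcomp A hAbarLsc F hFusc
end
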